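/- Let G be a connected cubic simple graph with n vertices and m = 3n/2 edges, m even. For a perfect matching N of the line graph L(G), let M_N* denote the family of all perfect matchings of M(G) of the form M'_N ∪ M, where M'_N = { {v, e3} : v ∈ V(G) such that G_v contains the edge {e1, e2} of N, with e3 the third edge incident to v }, and M ranges over perfect matchings of the union of the subgraphs G_v containing no edge of N. Then for any two distinct perfect matchings N and N' of L(G), the families M_N* and M_{N'}* are disjoint; moreover each family M_N* has exactly 3^(n/4) elements. -/

import Mathlib

variable {V : Type*}

/-- The vertex-edge graph (middle graph) of `G`: vertices are `V(G) ⊕ E(G)`;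
two `e`-vertices are adjacent iff the corresponding edges of `G` are distinct and share
an endpoint; a `v`-vertex and an `e`-vertex are adjacent iff the vertex is an endpoint of
the edge; no two `v`-vertices are adjacent. -/
def middleGraph (G : SimpleGraph V) : SimpleGraph (V ⊕ G.edgeSet) where
  Adj a b :=
    match a, b with
    | Sum.inl _, Sum.inl _ => False
    | Sum.inl u, Sum.inr e => u ∈ (e : Sym2 V)
    | Sum.inr e, Sum.inl u => u ∈ (e : Sym2 V)
    | Sum.inr e, Sum.inr f => e ≠ f ∧ ∃ v, v ∈ (e : Sym2 V) ∧ v ∈ (f : Sym2 V)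
  symm := by
    constructor
    rintro (u | e) (v | f) h
    · exact h.elim
    · exact h
    · exact h
    · exact ⟨h.1.symm, h.2.imp fun v hv => ⟨hv.2, hv.1⟩⟩
  loopless := by
    constructor
    rintro (u | e) h
    · exact h
    · exact h.1 rfl

/-- The line graph of `G`, with vertex set the edge set of `G`; two edges are adjacent
iff they are distinct and share an endpoint. -/
def lineGraph (G : SimpleGraph V) : SimpleGraph G.edgeSet where
  Adj e f := e ≠ f ∧ ∃ v, v ∈ (e : Sym2 V) ∧ v ∈ (f : Sym2 V)
  symm := ⟨fun e f h => ⟨h.1.symm, h.2.imp fun v hv => ⟨hv.2, hv.1⟩⟩⟩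
  loopless := ⟨fun e h => h.1 rfl⟩

/-- `P` is a perfect matching (dimer covering) of `H`, viewed as a set of edges:
all members are edges of `H`, distinct members share no vertex, and every vertex of `H`
lies in some member. -/
def IsPerfMatchSet {W : Type*} (H : SimpleGraph W) (P : Set (Sym2 W)) : Prop :=
  P ⊆ H.edgeSet ∧
  (∀ p ∈ P, ∀ q ∈ P, p ≠ q → ∀ a, a ∈ p → a ∉ q) ∧
  (∀ w : W, ∃ p ∈ P, w ∈ p)

/-- The number of perfect matchings (dimer coverings) of `H`. -/
noncomputable def pmCount {W : Type*} (H : SimpleGraph W) : ℕ :=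
  {P : Set (Sym2 W) | IsPerfMatchSet H P}.ncard

/-- For a vertex `v` of `G`, the set of vertices of the middle graph `M(G)` consisting of
the `v`-vertex `v` together with the `e`-vertices corresponding to the edges of `G`
incident with `v`.  For a cubic graph this induces a `K₄` in `M(G)`, denoted `G_v`. -/
def K4set (G : SimpleGraph V) (v : V) : Set (V ⊕ G.edgeSet) :=
  {a | a = Sum.inl v ∨ ∃ e : G.edgeSet, v ∈ (e : Sym2 V) ∧ a = Sum.inr e}

/-- Given a set `N` of edges of the line graph of `G`, the set of vertices `v` of `G`
such that the `K₄`-subgraph `G_v` of `M(G)` contains no edge of `N`, i.e. no member of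
`N` has both endpoints incident with `v`. -/
def badSet (G : SimpleGraph V) (N : Set (Sym2 G.edgeSet)) : Set V :=
  {v | ∀ p ∈ N, ¬ ∀ x ∈ p, v ∈ (x : Sym2 V)}

/-- Given a set `N` of edges of the line graph of `G`, the set `M'_N` of those edges of
`M(G)` of the form `{v, e₃}` where the `K₄`-subgraph `G_v` contains an edge `{e₁, e₂}`
of `N` and `e₃` is the third edge of `G` incident with `v`. -/
def matchEdges (G : SimpleGraph V) (N : Set (Sym2 G.edgeSet)) :
    Set (Sym2 (V ⊕ G.edgeSet)) :=
  {p | ∃ (v : V) (e1 e2 e3 : G.edgeSet), s(e1, e2) ∈ N ∧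
    v ∈ (e1 : Sym2 V) ∧ v ∈ (e2 : Sym2 V) ∧ v ∈ (e3 : Sym2 V) ∧
    e3 ≠ e1 ∧ e3 ≠ e2 ∧ p = s(Sum.inl v, Sum.inr e3)}

/-- The family `M_N*` of perfect matchings of `M(G)` of the form `M'_N ∪ M`, where `M`
ranges over the perfect matchings of the union of the `K₄`-subgraphs `G_v` containing
no edge of `N`. -/
def MNstar (G : SimpleGraph V) (N : Set (Sym2 G.edgeSet)) :
    Set (Set (Sym2 (V ⊕ G.edgeSet))) :=
  {P | ∃ M : Set (Sym2 (V ⊕ G.edgeSet)),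
    (∀ p ∈ M, p ∈ (middleGraph G).edgeSet ∧ ∃ v ∈ badSet G N, ∀ a ∈ p, a ∈ K4set G v) ∧
    (∀ p ∈ M, ∀ q ∈ M, p ≠ q → ∀ a, a ∈ p → a ∉ q) ∧
    (∀ v ∈ badSet G N, ∀ a ∈ K4set G v, ∃ p ∈ M, a ∈ p) ∧
    P = matchEdges G N ∪ M}

/-!
An edge `{e₁, e₂}` of `N` determines the common endpoint `v` of `e₁` and `e₂`, and as `G` is
cubic no vertex is the common endpoint of two edges of `N`. So `|N| = m / 2 = 3n / 4` vertices
are such endpoints and the other `n / 4` (the set `badSet G N`) are not. Two of the latter are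
never adjacent, since an edge `vw` of `G` meets its partner in `N` at `v` or at `w`. Hence their
`K₄`s are vertex-disjoint, a matching `M` is a choice of one of the three perfect matchings of
each of them, and `M ↦ M'_N ∪ M` is injective because `M'_N` has no edge inside these `K₄`s.

For disjointness, `N` is read off from any `P ∈ M_N*`: `{e₁, e₂} ∈ N` iff the third edge `e₃`
at the common endpoint `v` is matched with `v` in `P` while `{e₁, e₂}` is not an edge of `P`.
If `v` were bad, the perfect matching of its `K₄` containing `{v, e₃}` would contain `{e₁, e₂}`.
-/

section PieceMatching

variable {W ι : Type*} {H : SimpleGraph W} {S : ι → Set W} {B : Set ι} {i : ι}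
  {M M₁ M₂ : Set (Sym2 W)} {x a b c : W}

/-- A perfect matching of the union (not of the subgraph induced on the union) of the
subgraphs `H[S i]`, `i ∈ B`. -/
def IsPieceMatching (H : SimpleGraph W) (S : ι → Set W) (B : Set ι) (M : Set (Sym2 W)) :
    Prop :=
  (∀ p ∈ M, p ∈ H.edgeSet ∧ ∃ i ∈ B, ∀ a ∈ p, a ∈ S i) ∧
  (∀ p ∈ M, ∀ q ∈ M, p ≠ q → ∀ a, a ∈ p → a ∉ q) ∧
  (∀ i ∈ B, ∀ a ∈ S i, ∃ p ∈ M, a ∈ p)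

lemma isPieceMatching_empty_iff : IsPieceMatching H S ∅ M ↔ M = ∅ := by
  refine ⟨fun hM => Set.eq_empty_of_forall_notMem fun p hp => ?_, ?_⟩
  · obtain ⟨-, _, hi, -⟩ := hM.1 p hp
    exact hi
  · rintro rfl
    exact ⟨by simp, by simp, by simp⟩

lemma IsPieceMatching.subset_sym2 (hM : IsPieceMatching H S {i} M) : M ⊆ (S i).sym2 := by
  intro p hp
  obtain ⟨-, j, rfl, hj⟩ := hM.1 p hp
  exact Set.mem_sym2_iff_subset.2 hj

lemma IsPieceMatching.disjoint_sym2 (hM : IsPieceMatching H S B M)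
    (hB : (insert i B).PairwiseDisjoint S) (hi : i ∉ B) : Disjoint M (S i).sym2 := by
  refine Set.disjoint_left.2 fun p hp hpi => ?_
  obtain ⟨-, j, hj, hpj⟩ := hM.1 p hp
  have hij : i ≠ j := fun h => hi (h ▸ hj)
  exact Set.disjoint_left.1 (hB (Set.mem_insert i B) (Set.mem_insert_of_mem i hj) hij)
    (Set.mem_sym2_iff_subset.1 hpi p.out_fst_mem) (hpj _ p.out_fst_mem)

lemma IsPieceMatching.inter_sym2 (hM : IsPieceMatching H S B M) (hB : B.PairwiseDisjoint S)
    (hi : i ∈ B) : IsPieceMatching H S {i} (M ∩ (S i).sym2) := by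
  obtain ⟨hedge, hdisj, hcover⟩ := hM
  refine ⟨fun p hp => ⟨(hedge p hp.1).1, i, rfl, Set.mem_sym2_iff_subset.1 hp.2⟩,
    fun p hp q hq => hdisj p hp.1 q hq.1, ?_⟩
  rintro j (rfl : j = i) a ha
  obtain ⟨p, hp, hap⟩ := hcover j hi a ha
  obtain ⟨-, k, hk, hpk⟩ := hedge p hp
  obtain rfl : j = k := hB.elim hi hk (Set.not_disjoint_iff.2 ⟨a, ha, hpk a hap⟩)
  exact ⟨p, ⟨hp, Set.mem_sym2_iff_subset.2 hpk⟩, hap⟩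

lemma IsPieceMatching.sdiff_sym2 (hM : IsPieceMatching H S (insert i B) M)
    (hB : (insert i B).PairwiseDisjoint S) (hi : i ∉ B) :
    IsPieceMatching H S B (M \ (S i).sym2) := by
  obtain ⟨hedge, hdisj, hcover⟩ := hM
  refine ⟨fun p hp => ?_, fun p hp q hq => hdisj p hp.1 q hq.1, fun j hj a ha => ?_⟩
  · obtain ⟨hpH, j, hj, hpj⟩ := hedge p hp.1
    rcases hj with rfl | hj
    · exact absurd (Set.mem_sym2_iff_subset.2 hpj) hp.2
    · exact ⟨hpH, j, hj, hpj⟩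
  · obtain ⟨p, hp, hap⟩ := hcover j (Set.mem_insert_of_mem i hj) a ha
    have hij : i ≠ j := fun h => hi (h ▸ hj)
    refine ⟨p, ⟨hp, fun hpi => ?_⟩, hap⟩
    exact Set.disjoint_left.1 (hB (Set.mem_insert i B) (Set.mem_insert_of_mem i hj) hij)
      (Set.mem_sym2_iff_subset.1 hpi hap) ha

lemma IsPieceMatching.union (h₁ : IsPieceMatching H S {i} M₁) (h₂ : IsPieceMatching H S B M₂)
    (hB : (insert i B).PairwiseDisjoint S) (hi : i ∉ B) :
    IsPieceMatching H S (insert i B) (M₁ ∪ M₂) := by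
  have hcross : ∀ p ∈ M₁, ∀ q ∈ M₂, ∀ a, a ∈ p → a ∉ q := by
    intro p hp q hq a hap haq
    obtain ⟨-, j, hj, hqj⟩ := h₂.1 q hq
    have hij : i ≠ j := fun h => hi (h ▸ hj)
    exact Set.disjoint_left.1 (hB (Set.mem_insert i B) (Set.mem_insert_of_mem i hj) hij)
      (Set.mem_sym2_iff_subset.1 (h₁.subset_sym2 hp) hap) (hqj a haq)
  refine ⟨?_, ?_, ?_⟩
  · rintro p (hp | hp)
    · obtain ⟨hpH, j, hj, hpj⟩ := h₁.1 p hp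
      exact ⟨hpH, j, Set.mem_insert_iff.2 (Or.inl hj), hpj⟩
    · obtain ⟨hpH, j, hj, hpj⟩ := h₂.1 p hp
      exact ⟨hpH, j, Set.mem_insert_of_mem i hj, hpj⟩
  · rintro p (hp | hp) q (hq | hq) hpq a hap
    · exact h₁.2.1 p hp q hq hpq a hap
    · exact hcross p hp q hq a hap
    · exact fun haq => hcross q hq p hp a haq hap
    · exact h₂.2.1 p hp q hq hpq a hap
  · rintro j (rfl | hj) a ha
    · obtain ⟨p, hp, hap⟩ := h₁.2.2 j rfl a ha
      exact ⟨p, Or.inl hp, hap⟩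
    · obtain ⟨p, hp, hap⟩ := h₂.2.2 j hj a ha
      exact ⟨p, Or.inr hp, hap⟩

def isPieceMatchingInsertEquiv (hB : (insert i B).PairwiseDisjoint S) (hi : i ∉ B) :
    {M | IsPieceMatching H S (insert i B) M} ≃
      {M | IsPieceMatching H S {i} M} × {M | IsPieceMatching H S B M} where
  toFun M := (⟨M.1 ∩ (S i).sym2, M.2.inter_sym2 hB (Set.mem_insert i B)⟩,
    ⟨M.1 \ (S i).sym2, M.2.sdiff_sym2 hB hi⟩)
  invFun M := ⟨M.1.1 ∪ M.2.1, M.1.2.union M.2.2 hB hi⟩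
  left_inv M := Subtype.ext (Set.inter_union_sdiff M.1 _)
  right_inv := by
    rintro ⟨⟨M₁, h₁⟩, ⟨M₂, h₂⟩⟩
    have hsub := h₁.subset_sym2
    have hdisj := h₂.disjoint_sym2 hB hi
    ext p : 3 <;> simp only [Set.mem_inter_iff, Set.mem_sdiff, Set.mem_union]
    · exact ⟨fun h => h.1.resolve_right fun hp => Set.disjoint_left.1 hdisj hp h.2,
        fun hp => ⟨Or.inl hp, hsub hp⟩⟩
    · exact ⟨fun h => h.1.resolve_left fun hp => h.2 (hsub hp),
        fun hp => ⟨Or.inr hp, Set.disjoint_left.1 hdisj hp⟩⟩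

lemma ncard_setOf_isPieceMatching [DecidableEq ι] (B : Finset ι)
    (hB : (B : Set ι).PairwiseDisjoint S) :
    {M | IsPieceMatching H S B M}.ncard = ∏ i ∈ B, {M | IsPieceMatching H S {i} M}.ncard := by
  induction B using Finset.induction_on with
  | empty => simp [isPieceMatching_empty_iff]
  | insert i B hi ih =>
    rw [Finset.coe_insert] at hB ⊢
    rw [Finset.prod_insert hi, ← ih (hB.subset (Set.subset_insert i _)),
      ← Nat.card_coe_set_eq, Nat.card_congr (isPieceMatchingInsertEquiv hB hi),
      Nat.card_prod, Nat.card_coe_set_eq, Nat.card_coe_set_eq]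

lemma IsPieceMatching.eq_pair_of_mem (hM : IsPieceMatching H S {i} M)
    (hS : S i = {x, a, b, c}) (hxb : x ≠ b) (hab : a ≠ b) (hxa : s(x, a) ∈ M) :
    M = {s(x, a), s(b, c)} := by
  obtain ⟨hedge, hdisj, hcover⟩ := hM
  obtain ⟨q, hq, hbq⟩ := hcover i rfl b (by simp [hS])
  have hqxa : q ≠ s(x, a) := by
    rintro rfl
    simp [hxb.symm, hab.symm] at hbq
  obtain ⟨y, rfl⟩ := Sym2.mem_iff_exists.1 hbq
  obtain ⟨hqH, j, rfl, hqS⟩ := hedge _ hq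
  have hbc : s(b, y) = s(b, c) := by
    have hy : y = x ∨ y = a ∨ y = b ∨ y = c := by simpa [hS] using hqS y (by simp)
    have hyx : y ≠ x := fun h => hdisj _ hxa _ hq hqxa.symm x (by simp) (by simp [h])
    have hya : y ≠ a := fun h => hdisj _ hxa _ hq hqxa.symm a (by simp) (by simp [h])
    have hyb : y ≠ b := ((SimpleGraph.mem_edgeSet H).1 hqH).ne.symm
    rw [hy.resolve_left hyx |>.resolve_left hya |>.resolve_left hyb]
  rw [hbc] at hq hqxa
  refine Set.Subset.antisymm (fun r hr => ?_) (by simp [Set.insert_subset_iff, hxa, hq])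
  obtain ⟨-, j, rfl, hrS⟩ := hedge r hr
  have hz : r.out.1 ∈ s(x, a) ∨ r.out.1 ∈ s(b, c) := by
    have := hrS _ r.out_fst_mem
    simp only [hS, Set.mem_insert_iff, Set.mem_singleton_iff] at this
    rcases this with h | h | h | h <;> simp [h]
  by_contra hr'
  simp only [Set.mem_insert_iff, Set.mem_singleton_iff, not_or] at hr'
  rcases hz with hz | hz
  · exact hdisj _ hr _ hxa hr'.1 _ r.out_fst_mem hz
  · exact hdisj _ hr _ hq hr'.2 _ r.out_fst_mem hz

lemma isPieceMatching_pair (hS : S i = {x, a, b, c}) (hH : H.IsClique (S i))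
    (hxa : x ≠ a) (hxb : x ≠ b) (hxc : x ≠ c) (hab : a ≠ b) (hac : a ≠ c) (hbc : b ≠ c) :
    IsPieceMatching H S {i} {s(x, a), s(b, c)} := by
  have hxa_bc : ∀ y ∈ s(x, a), y ∉ s(b, c) := by
    simp only [Sym2.mem_iff]
    rintro y (rfl | rfl) (rfl | rfl) <;> contradiction
  refine ⟨?_, ?_, ?_⟩
  · rintro p (rfl | rfl)
    · exact ⟨hH (by simp [hS]) (by simp [hS]) hxa, i, rfl, by simp [hS]⟩
    · exact ⟨hH (by simp [hS]) (by simp [hS]) hbc, i, rfl, by simp [hS]⟩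
  · rintro p (rfl | rfl) q (rfl | rfl) hpq y hyp hyq
    · exact hpq rfl
    · exact hxa_bc y hyp hyq
    · exact hxa_bc y hyq hyp
    · exact hpq rfl
  · rintro j (rfl : j = i) y hy
    rw [hS] at hy
    rcases hy with rfl | rfl | rfl | rfl <;> simp

lemma setOf_isPieceMatching_singleton (hS : S i = {x, a, b, c}) (hH : H.IsClique (S i))
    (hxa : x ≠ a) (hxb : x ≠ b) (hxc : x ≠ c) (hab : a ≠ b) (hac : a ≠ c) (hbc : b ≠ c) :
    {M | IsPieceMatching H S {i} M} =
      {{s(x, a), s(b, c)}, {s(x, b), s(a, c)}, {s(x, c), s(a, b)}} := by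
  have hS' : S i = {x, b, a, c} := by rw [hS, Set.insert_comm a b]
  have hS'' : S i = {x, c, a, b} := by
    ext y
    simp only [hS, Set.mem_insert_iff, Set.mem_singleton_iff]
    tauto
  ext M
  simp only [Set.mem_ofPred_eq, Set.mem_insert_iff, Set.mem_singleton_iff]
  constructor
  · intro hM
    obtain ⟨p, hp, hxp⟩ := hM.2.2 i rfl x (by simp [hS])
    obtain ⟨y, rfl⟩ := Sym2.mem_iff_exists.1 hxp
    obtain ⟨hpH, j, rfl, hpS⟩ := hM.1 _ hp
    have hy : y = x ∨ y = a ∨ y = b ∨ y = c := by simpa [hS] using hpS y (by simp)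
    rcases hy with rfl | rfl | rfl | rfl
    · exact absurd rfl ((SimpleGraph.mem_edgeSet H).1 hpH).ne
    · exact Or.inl (hM.eq_pair_of_mem hS hxb hab hp)
    · exact Or.inr (Or.inl (hM.eq_pair_of_mem hS' hxa hab.symm hp))
    · exact Or.inr (Or.inr (hM.eq_pair_of_mem hS'' hxa hac.symm hp))
  · rintro (rfl | rfl | rfl)
    · exact isPieceMatching_pair hS hH hxa hxb hxc hab hac hbc
    · exact isPieceMatching_pair hS' hH hxb hxa hxc hab.symm hbc hac
    · exact isPieceMatching_pair hS'' hH hxc hxa hxb hac.symm hbc.symm hab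

lemma ncard_setOf_isPieceMatching_singleton (hS : S i = {x, a, b, c}) (hH : H.IsClique (S i))
    (hxa : x ≠ a) (hxb : x ≠ b) (hxc : x ≠ c) (hab : a ≠ b) (hac : a ≠ c) (hbc : b ≠ c) :
    {M | IsPieceMatching H S {i} M}.ncard = 3 := by
  rw [setOf_isPieceMatching_singleton hS hH hxa hxb hxc hab hac hbc,
    Set.ncard_insert_of_notMem, Set.ncard_pair]
  · intro h
    have := h ▸ Set.mem_insert s(x, b) {s(a, c)}
    simp [hxa, hxb, hxc, hbc] at this
  · rintro (h | h) <;> have := h ▸ Set.mem_insert s(x, a) {s(b, c)} <;>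
      simp [hxa, hxb, hxc, hab, hac] at this

end PieceMatching

section Cubic

variable {G : SimpleGraph V} [G.LocallyFinite] (hG : G.IsRegularOfDegree 3) {v : V}
include hG

lemma ncard_setOf_mem_edge : {e : G.edgeSet | v ∈ (e : Sym2 V)}.ncard = 3 := by
  classical
  have himage : Subtype.val '' {e : G.edgeSet | v ∈ (e : Sym2 V)} = G.incidenceSet v := by
    ext z
    simp [SimpleGraph.incidenceSet, and_comm]
  rw [← Set.ncard_image_of_injective _ Subtype.val_injective, himage, ← Nat.card_coe_set_eq,
    Nat.card_eq_fintype_card, G.card_incidenceSet_eq_degree, hG v]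

lemma finite_setOf_mem_edge : {e : G.edgeSet | v ∈ (e : Sym2 V)}.Finite :=
  Set.finite_of_ncard_ne_zero (by rw [ncard_setOf_mem_edge hG]; norm_num)

lemma exists_mem_edge_notMem {s : Set G.edgeSet} (hs : s.Finite) (hs3 : s.ncard < 3) :
    ∃ e : G.edgeSet, v ∈ (e : Sym2 V) ∧ e ∉ s :=
  Set.exists_mem_notMem_of_ncard_lt_ncard (t := {e : G.edgeSet | v ∈ (e : Sym2 V)})
    (by rwa [ncard_setOf_mem_edge hG]) hs

lemma eq_or_eq_or_eq_of_mem_edge {a b c e : G.edgeSet} (hab : a ≠ b) (hac : a ≠ c) (hbc : b ≠ c)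
    (ha : v ∈ (a : Sym2 V)) (hb : v ∈ (b : Sym2 V)) (hc : v ∈ (c : Sym2 V))
    (he : v ∈ (e : Sym2 V)) : e = a ∨ e = b ∨ e = c := by
  by_contra! h
  have hsub : ({e, a, b, c} : Set G.edgeSet) ⊆ {e : G.edgeSet | v ∈ (e : Sym2 V)} := by
    simp [Set.insert_subset_iff, ha, hb, hc, he]
  have := Set.ncard_le_ncard hsub (finite_setOf_mem_edge hG)
  rw [ncard_setOf_mem_edge hG, Set.ncard_insert_of_notMem (by simp [h.1, h.2.1, h.2.2]),
    Set.ncard_insert_of_notMem (by simp [hab, hac]), Set.ncard_pair hbc] at this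
  omega

end Cubic

lemma exists_three_mem_edge {G : SimpleGraph V} [G.LocallyFinite] (hG : G.IsRegularOfDegree 3)
    (v : V) : ∃ a b c : G.edgeSet, a ≠ b ∧ a ≠ c ∧ b ≠ c ∧
      v ∈ (a : Sym2 V) ∧ v ∈ (b : Sym2 V) ∧ v ∈ (c : Sym2 V) := by
  obtain ⟨a, ha, -⟩ := exists_mem_edge_notMem hG (v := v) Set.finite_empty (by simp)
  obtain ⟨b, hb, hba⟩ := exists_mem_edge_notMem hG (v := v) (Set.finite_singleton a) (by simp)
  obtain ⟨c, hc, hcab⟩ := exists_mem_edge_notMem hG (v := v) (Set.toFinite {a, b})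
    ((Set.ncard_insert_le a {b}).trans_lt (by simp))
  simp only [Set.mem_insert_iff, Set.mem_singleton_iff, not_or] at hba hcab
  exact ⟨a, b, c, Ne.symm hba, Ne.symm hcab.1, Ne.symm hcab.2, ha, hb, hc⟩

section MiddleGraph

variable {G : SimpleGraph V} {v : V}

@[simp] lemma inl_mem_K4set {u : V} : Sum.inl u ∈ K4set G v ↔ u = v := by simp [K4set]

@[simp] lemma inr_mem_K4set {e : G.edgeSet} : Sum.inr e ∈ K4set G v ↔ v ∈ (e : Sym2 V) := by
  simp [K4set]

lemma isClique_K4set : (middleGraph G).IsClique (K4set G v) := by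
  rintro (u | e) hu (w | f) hw hne <;> simp only [inl_mem_K4set, inr_mem_K4set] at hu hw
  · exact absurd (by rw [hu, hw]) hne
  · exact (hu ▸ hw : u ∈ (f : Sym2 V))
  · exact (hw ▸ hu : w ∈ (e : Sym2 V))
  · exact ⟨fun h => hne (congrArg _ h), v, hu, hw⟩

lemma K4set_eq [G.LocallyFinite] (hG : G.IsRegularOfDegree 3) {a b c : G.edgeSet} (hab : a ≠ b)
    (hac : a ≠ c) (hbc : b ≠ c) (ha : v ∈ (a : Sym2 V)) (hb : v ∈ (b : Sym2 V))
    (hc : v ∈ (c : Sym2 V)) : K4set G v = {Sum.inl v, Sum.inr a, Sum.inr b, Sum.inr c} := by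
  ext (u | e)
  · simp
  · simp only [inr_mem_K4set, Set.mem_insert_iff, Set.mem_singleton_iff, reduceCtorEq,
      Sum.inr.injEq, false_or]
    exact ⟨eq_or_eq_or_eq_of_mem_edge hG hab hac hbc ha hb hc,
      by rintro (rfl | rfl | rfl) <;> assumption⟩

lemma ncard_setOf_isPieceMatching_K4set [G.LocallyFinite] (hG : G.IsRegularOfDegree 3) (v : V) :
    {M | IsPieceMatching (middleGraph G) (K4set G) {v} M}.ncard = 3 := by
  obtain ⟨a, b, c, hab, hac, hbc, ha, hb, hc⟩ := exists_three_mem_edge hG v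
  exact ncard_setOf_isPieceMatching_singleton (K4set_eq hG hab hac hbc ha hb hc) isClique_K4set
    (by simp) (by simp) (by simp) (by simpa) (by simpa) (by simpa)

end MiddleGraph

lemma Sym2.eq_of_mem_of_mem_of_ne {α : Type*} {e f : Sym2 α} {v w : α} (hef : e ≠ f)
    (hve : v ∈ e) (hwe : w ∈ e) (hvf : v ∈ f) (hwf : w ∈ f) : v = w := by
  by_contra hvw
  exact hef (((Sym2.mem_and_mem_iff hvw).1 ⟨hve, hwe⟩).trans
    ((Sym2.mem_and_mem_iff hvw).1 ⟨hvf, hwf⟩).symm)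

section LineGraph

variable {G : SimpleGraph V} {N : Set (Sym2 G.edgeSet)} {p q : Sym2 G.edgeSet} {v w : V}

lemma exists_common_vertex (hp : p ∈ (lineGraph G).edgeSet) :
    ∃ v, ∀ x ∈ p, v ∈ (x : Sym2 V) := by
  induction p using Sym2.ind with | _ e f => ?_
  obtain ⟨-, v, he, hf⟩ := hp
  exact ⟨v, by simp [he, hf]⟩

lemma common_vertex_unique (hp : p ∈ (lineGraph G).edgeSet) (hv : ∀ x ∈ p, v ∈ (x : Sym2 V))
    (hw : ∀ x ∈ p, w ∈ (x : Sym2 V)) : v = w := by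
  induction p using Sym2.ind with | _ e f => ?_
  exact Sym2.eq_of_mem_of_mem_of_ne (fun h => hp.1 (Subtype.ext h)) (hv e (by simp))
    (hw e (by simp)) (hv f (by simp)) (hw f (by simp))

lemma eq_of_mem_of_common_vertex [G.LocallyFinite] (hG : G.IsRegularOfDegree 3)
    (hN : IsPerfMatchSet (lineGraph G) N) (hp : p ∈ N) (hq : q ∈ N)
    (hpv : ∀ x ∈ p, v ∈ (x : Sym2 V)) (hqv : ∀ x ∈ q, v ∈ (x : Sym2 V)) : p = q := by
  by_contra hpq
  induction p using Sym2.ind with | _ e₁ e₂ => ?_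
  induction q using Sym2.ind with | _ f₁ f₂ => ?_
  have he : e₁ ≠ e₂ := (hN.1 hp).1
  have hf : f₁ ≠ f₂ := (hN.1 hq).1
  have hdisj := hN.2.1 _ hp _ hq hpq
  have h₁ : f₁ ≠ e₁ ∧ f₁ ≠ e₂ :=
    ⟨fun h => hdisj f₁ (by simp [h]) (by simp), fun h => hdisj f₁ (by simp [h]) (by simp)⟩
  have h₂ : f₂ ≠ e₁ ∧ f₂ ≠ e₂ :=
    ⟨fun h => hdisj f₂ (by simp [h]) (by simp), fun h => hdisj f₂ (by simp [h]) (by simp)⟩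
  rcases eq_or_eq_or_eq_of_mem_edge hG he (Ne.symm h₁.1) (Ne.symm h₁.2) (hpv _ (by simp))
    (hpv _ (by simp)) (hqv _ (by simp)) (hqv f₂ (by simp)) with h | h | h
  exacts [h₂.1 h, h₂.2 h, hf h.symm]

lemma not_adj_of_mem_badSet (hN : IsPerfMatchSet (lineGraph G) N) (hv : v ∈ badSet G N)
    (hw : w ∈ badSet G N) : ¬ G.Adj v w := by
  intro hvw
  obtain ⟨p, hpN, hep⟩ := hN.2.2 ⟨s(v, w), hvw⟩
  obtain ⟨u, hu⟩ := exists_common_vertex (hN.1 hpN)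
  rcases Sym2.mem_iff.1 (hu _ hep) with rfl | rfl
  exacts [hv p hpN hu, hw p hpN hu]

lemma pairwiseDisjoint_K4set (hN : IsPerfMatchSet (lineGraph G) N) :
    (badSet G N).PairwiseDisjoint (K4set G) := by
  intro v hv w hw hvw
  refine Set.disjoint_left.2 fun a hav haw => ?_
  rcases a with u | e <;> simp only [inl_mem_K4set, inr_mem_K4set] at hav haw
  · exact hvw (hav.symm.trans haw)
  · refine not_adj_of_mem_badSet hN hv hw ?_
    rw [← SimpleGraph.mem_edgeSet, ← (Sym2.mem_and_mem_iff hvw).1 ⟨hav, haw⟩]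
    exact e.2

end LineGraph

lemma IsPerfMatchSet.two_mul_ncard {W : Type*} [Finite W] {H : SimpleGraph W} {P : Set (Sym2 W)}
    (hP : IsPerfMatchSet H P) : 2 * P.ncard = Nat.card W := by
  classical
  have := Fintype.ofFinite W
  have hPfin : P.Finite := Set.toFinite P
  have hcover : Finset.univ = hPfin.toFinset.biUnion Sym2.toFinset := by
    ext w
    simpa [Sym2.mem_toFinset] using hP.2.2 w
  have hdisj : (hPfin.toFinset : Set (Sym2 W)).PairwiseDisjoint Sym2.toFinset := by
    intro p hp q hq hpq
    simp only [Set.Finite.coe_toFinset] at hp hq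
    exact Finset.disjoint_left.2 fun w hwp hwq =>
      hP.2.1 p hp q hq hpq w (Sym2.mem_toFinset.1 hwp) (Sym2.mem_toFinset.1 hwq)
  rw [Nat.card_eq_fintype_card, ← Finset.card_univ, hcover, Finset.card_biUnion hdisj,
    Finset.sum_congr rfl fun p hp => Sym2.card_toFinset_of_not_isDiag p
      (H.not_isDiag_of_mem_edgeSet (hP.1 ((Set.Finite.mem_toFinset _).1 hp))),
    Finset.sum_const, smul_eq_mul, mul_comm, Set.ncard_eq_toFinset_card P hPfin]

section Counting

variable {G : SimpleGraph V} {N : Set (Sym2 G.edgeSet)}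

lemma ncard_compl_badSet [G.LocallyFinite] (hG : G.IsRegularOfDegree 3)
    (hN : IsPerfMatchSet (lineGraph G) N) : (badSet G N)ᶜ.ncard = N.ncard := by
  choose host hhost using fun p (hp : p ∈ N) => exists_common_vertex (hN.1 hp)
  symm
  refine Set.ncard_congr host (fun p hp hbad => hbad p hp (hhost p hp))
    (fun p q hp hq hpq => eq_of_mem_of_common_vertex hG hN hp hq (hhost p hp) (hpq ▸ hhost q hq))
    fun v hv => ?_
  obtain ⟨p, hp, hpv⟩ : ∃ p ∈ N, ∀ x ∈ p, v ∈ (x : Sym2 V) := by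
    simpa [badSet] using hv
  exact ⟨p, hp, common_vertex_unique (hN.1 hp) (hhost p hp) hpv⟩

lemma four_mul_ncard_badSet [Fintype V] [DecidableRel G.Adj] (hG : G.IsRegularOfDegree 3)
    (hN : IsPerfMatchSet (lineGraph G) N) : 4 * (badSet G N).ncard = Fintype.card V := by
  classical
  have hhandshake : 2 * Fintype.card G.edgeSet = 3 * Fintype.card V := by
    rw [← SimpleGraph.edgeFinset_card, ← G.sum_degrees_eq_twice_card_edges,
      Finset.sum_congr rfl fun v _ => hG v]
    simp [mul_comm]
  have hN2 := hN.two_mul_ncard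
  have hsplit := Set.ncard_add_ncard_compl (badSet G N)
  rw [ncard_compl_badSet hG hN] at hsplit
  rw [Nat.card_eq_fintype_card] at hN2 hsplit
  omega

end Counting

section MNstar

variable {G : SimpleGraph V} {N : Set (Sym2 G.edgeSet)} {M P : Set (Sym2 (V ⊕ G.edgeSet))}

lemma MNstar_eq_image : MNstar G N = (matchEdges G N ∪ ·) ''
    {M | IsPieceMatching (middleGraph G) (K4set G) (badSet G N) M} := by
  ext P
  constructor
  · rintro ⟨M, h₁, h₂, h₃, rfl⟩
    exact ⟨M, ⟨h₁, h₂, h₃⟩, rfl⟩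
  · rintro ⟨M, ⟨h₁, h₂, h₃⟩, rfl⟩
    exact ⟨M, h₁, h₂, h₃, rfl⟩

lemma disjoint_matchEdges (hM : IsPieceMatching (middleGraph G) (K4set G) (badSet G N) M) :
    Disjoint (matchEdges G N) M := by
  refine Set.disjoint_left.2 ?_
  rintro _ ⟨v, e₁, e₂, e₃, hN, h₁, h₂, -, -, -, rfl⟩ hM'
  obtain ⟨-, w, hw, hK4⟩ := hM.1 _ hM'
  obtain rfl : v = w := inl_mem_K4set.1 (hK4 _ (Sym2.mem_mk_left _ _))
  exact hw _ hN (by simp [h₁, h₂])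

lemma ncard_MNstar [Finite V] [G.LocallyFinite] (hG : G.IsRegularOfDegree 3)
    (hN : IsPerfMatchSet (lineGraph G) N) : (MNstar G N).ncard = 3 ^ (badSet G N).ncard := by
  classical
  have hinj : Set.InjOn (matchEdges G N ∪ ·)
      {M | IsPieceMatching (middleGraph G) (K4set G) (badSet G N) M} := by
    intro M₁ h₁ M₂ h₂ (h : matchEdges G N ∪ M₁ = matchEdges G N ∪ M₂)
    rw [← Set.union_sdiff_cancel_left (Set.disjoint_iff.1 (disjoint_matchEdges h₁)), h,
      Set.union_sdiff_cancel_left (Set.disjoint_iff.1 (disjoint_matchEdges h₂))]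
  have hfin := Set.toFinite (badSet G N)
  have hprod := ncard_setOf_isPieceMatching (H := middleGraph G) hfin.toFinset
    (by simpa using pairwiseDisjoint_K4set hN)
  rw [Set.Finite.coe_toFinset] at hprod
  rw [MNstar_eq_image, hinj.ncard_image, hprod,
    Finset.prod_congr rfl fun v _ => ncard_setOf_isPieceMatching_K4set hG v, Finset.prod_const,
    Set.ncard_eq_toFinset_card _ hfin]

end MNstar

section ReadOff

variable {G : SimpleGraph V} {N : Set (Sym2 G.edgeSet)} {P : Set (Sym2 (V ⊕ G.edgeSet))}

def readOff (G : SimpleGraph V) (P : Set (Sym2 (V ⊕ G.edgeSet))) : Set (Sym2 G.edgeSet) :=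
  {q | ∃ (v : V) (e₁ e₂ e₃ : G.edgeSet), q = s(e₁, e₂) ∧ e₁ ≠ e₂ ∧ e₃ ≠ e₁ ∧ e₃ ≠ e₂ ∧
    v ∈ (e₁ : Sym2 V) ∧ v ∈ (e₂ : Sym2 V) ∧ v ∈ (e₃ : Sym2 V) ∧
    s(Sum.inl v, Sum.inr e₃) ∈ P ∧ s(Sum.inr e₁, Sum.inr e₂) ∉ P}

variable [G.LocallyFinite] (hG : G.IsRegularOfDegree 3) (hN : IsPerfMatchSet (lineGraph G) N)
include hG hN

lemma subset_readOff (hP : P ∈ MNstar G N) : N ⊆ readOff G P := by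
  obtain ⟨M, hM, rfl⟩ := MNstar_eq_image ▸ hP
  intro q hq
  induction q using Sym2.ind with | _ e₁ e₂ => ?_
  obtain ⟨h₁₂, v, h₁, h₂⟩ := hN.1 hq
  have hvN : ∀ x ∈ s(e₁, e₂), v ∈ (x : Sym2 V) := by simp [h₁, h₂]
  obtain ⟨e₃, h₃, he₃⟩ := exists_mem_edge_notMem hG (v := v) (Set.toFinite {e₁, e₂})
    ((Set.ncard_insert_le e₁ {e₂}).trans_lt (by simp))
  simp only [Set.mem_insert_iff, Set.mem_singleton_iff, not_or] at he₃
  refine ⟨v, e₁, e₂, e₃, rfl, h₁₂, he₃.1, he₃.2, h₁, h₂, h₃,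
    Or.inl ⟨v, e₁, e₂, e₃, hq, h₁, h₂, h₃, he₃.1, he₃.2, rfl⟩, ?_⟩
  rintro (⟨u, f₁, f₂, f₃, -, -, -, -, -, -, h⟩ | hM')
  · simp at h
  · obtain ⟨-, w, hw, hK4⟩ := hM.1 _ hM'
    have hw₁ : w ∈ (e₁ : Sym2 V) := inr_mem_K4set.1 (hK4 _ (Sym2.mem_mk_left _ _))
    have hw₂ : w ∈ (e₂ : Sym2 V) := inr_mem_K4set.1 (hK4 _ (Sym2.mem_mk_right _ _))
    obtain rfl : v = w := Sym2.eq_of_mem_of_mem_of_ne (fun h => h₁₂ (Subtype.ext h)) h₁ hw₁ h₂ hw₂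
    exact hw _ hq hvN

lemma readOff_subset (hP : P ∈ MNstar G N) : readOff G P ⊆ N := by
  obtain ⟨M, hM, rfl⟩ := MNstar_eq_image ▸ hP
  rintro _ ⟨v, e₁, e₂, e₃, rfl, h₁₂, h₃₁, h₃₂, h₁, h₂, h₃, hv₃ | hv₃, h₁₂P⟩
  · obtain ⟨u, f₁, f₂, f₃, hf, hu₁, hu₂, hu₃, hf₁, hf₂, h⟩ := hv₃
    simp only [Sym2.eq_iff, Sum.inl.injEq, Sum.inr.injEq, reduceCtorEq, and_false, or_false] at h
    obtain ⟨rfl, rfl⟩ := h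
    have hf₁₂ : f₁ ≠ f₂ := (hN.1 hf).1
    have hf₁' := eq_or_eq_or_eq_of_mem_edge hG h₁₂ h₃₁.symm h₃₂.symm h₁ h₂ h₃ hu₁
    have hf₂' := eq_or_eq_or_eq_of_mem_edge hG h₁₂ h₃₁.symm h₃₂.symm h₁ h₂ h₃ hu₂
    rcases hf₁' with rfl | rfl | rfl <;> rcases hf₂' with rfl | rfl | rfl <;>
      first | exact hf | exact Sym2.eq_swap ▸ hf | contradiction
  · exfalso
    obtain ⟨-, w, hw, hK4⟩ := hM.1 _ hv₃
    obtain rfl : v = w := inl_mem_K4set.1 (hK4 _ (Sym2.mem_mk_left _ _))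
    have hMv := hM.inter_sym2 (pairwiseDisjoint_K4set hN) hw
    have hpair := hMv.eq_pair_of_mem (K4set_eq hG h₃₁ h₃₂ h₁₂ h₃ h₁ h₂) (by simp)
      (by simpa using h₃₁) ⟨hv₃, Set.mem_sym2_iff_subset.2 hK4⟩
    have : s(Sum.inr e₁, Sum.inr e₂) ∈ M ∩ (K4set G v).sym2 := by simp [hpair]
    exact h₁₂P (Or.inr this.1)

lemma readOff_eq (hP : P ∈ MNstar G N) : readOff G P = N :=
  (readOff_subset hG hN hP).antisymm (subset_readOff hG hN hP)

end ReadOff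

theorem MNstar_disjoint_and_card_general {V : Type*} [Fintype V]
    (G : SimpleGraph V) [DecidableRel G.Adj]
    (hcubic : G.IsRegularOfDegree 3) :
    (∀ N N' : Set (Sym2 G.edgeSet), IsPerfMatchSet (lineGraph G) N →
      IsPerfMatchSet (lineGraph G) N' → N ≠ N' →
      Disjoint (MNstar G N) (MNstar G N')) ∧
    (∀ N : Set (Sym2 G.edgeSet), IsPerfMatchSet (lineGraph G) N →
      (MNstar G N).ncard = 3 ^ (Fintype.card V / 4)) := by
  refine ⟨fun N N' hN hN' hNN' => Set.disjoint_left.2 fun P hP hP' => hNN' ?_, fun N hN => ?_⟩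
  · rw [← readOff_eq hcubic hN hP, readOff_eq hcubic hN' hP']
  · rw [ncard_MNstar hcubic hN, ← four_mul_ncard_badSet hcubic hN,
      Nat.mul_div_cancel_left _ (by norm_num)]

/-- Let `G` be a connected cubic graph with `n` vertices and an even
number of edges.  For distinct perfect matchings `N, N'` of `L(G)` the families `M_N*`
and `M_{N'}*` of perfect matchings of `M(G)` are disjoint; moreover each family `M_N*`
has exactly `3^(n/4)` elements. -/
theorem MNstar_disjoint_and_card {V : Type*} [Fintype V] [DecidableEq V]
    (G : SimpleGraph V) [DecidableRel G.Adj]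
    (hconn : G.Connected) (hcubic : G.IsRegularOfDegree 3)
    (heven : Even G.edgeFinset.card) :
    (∀ N N' : Set (Sym2 G.edgeSet), IsPerfMatchSet (lineGraph G) N →
      IsPerfMatchSet (lineGraph G) N' → N ≠ N' →
      Disjoint (MNstar G N) (MNstar G N')) ∧
    (∀ N : Set (Sym2 G.edgeSet), IsPerfMatchSet (lineGraph G) N →
      (MNstar G N).ncard = 3 ^ (Fintype.card V / 4)) :=
  MNstar_disjoint_and_card_general G hcubic
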